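/- Let Z_LP(B) and Z_IP(B) denote the optimal values of the fractional and 0-1 knapsack problems with budget B. Suppose the ratios v_i/b_i are distinct and the optimal fractional solution with budget B has a unique fractional item j with fraction x*_j. Then Z_IP(B) ≤ Z_IP(B - b_j x*_j) + v_j. -/

import Mathlib

/-- Optimal value of the 0-1 knapsack with budget `B`. -/
noncomputable def ZIP (n : ℕ) (v b : Fin n → ℝ) (B : ℝ) : ℝ :=
  sSup {t : ℝ | ∃ x : Fin n → ℝ, (∀ i, x i = 0 ∨ x i = 1) ∧
    (∑ i, b i * x i) ≤ B ∧ t = ∑ i, v i * x i}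

/-! The integral optimum is at most the fractional one, `∑ v i * x i`. Dropping the fractional
item `j` from `x` leaves an integral solution of cost `∑ b i * x i - b j * x j ≤ B - b j * x j`,
so `∑ v i * x i - v j * x j ≤ Z_IP(B - b j * x j)`, and `v j * x j ≤ v j`. -/

theorem sum_mul_update_zero {ι : Type*} [Fintype ι] [DecidableEq ι] (f x : ι → ℝ) (j : ι) :
    ∑ i, f i * Function.update x j 0 i = ∑ i, f i * x i - f j * x j := by
  rw [eq_sub_iff_add_eq, ← Finset.add_sum_erase _ _ (Finset.mem_univ j),
    ← Finset.add_sum_erase _ _ (Finset.mem_univ j)]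
  simp only [Function.update_self, mul_zero, zero_add]
  rw [add_comm]
  congr 1
  exact Finset.sum_congr rfl fun i hi => by rw [Function.update_of_ne (Finset.ne_of_mem_erase hi)]

theorem le_ZIP {n : ℕ} {v b : Fin n → ℝ} {B : ℝ} {y : Fin n → ℝ}
    (hy : ∀ i, y i = 0 ∨ y i = 1) (hyB : ∑ i, b i * y i ≤ B) :
    ∑ i, v i * y i ≤ ZIP n v b B := by
  refine le_csSup ⟨∑ i, |v i|, ?_⟩ ⟨y, hy, hyB, rfl⟩
  rintro t ⟨z, hz, -, rfl⟩
  refine Finset.sum_le_sum fun i _ => ?_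
  rcases hz i with h | h <;> simp [h, le_abs_self]

theorem ZIP_le {n : ℕ} {v b : Fin n → ℝ} {B c : ℝ} (hB : 0 ≤ B)
    (h : ∀ y : Fin n → ℝ, (∀ i, y i = 0 ∨ y i = 1) → ∑ i, b i * y i ≤ B → ∑ i, v i * y i ≤ c) :
    ZIP n v b B ≤ c := by
  refine csSup_le ⟨0, 0, fun _ => Or.inl rfl, by simpa using hB, by simp⟩ ?_
  rintro t ⟨y, hy, hyB, rfl⟩
  exact h y hy hyB

theorem ZIP_budget_split_general (n : ℕ) (v b : Fin n → ℝ) (B : ℝ)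
    (hv : ∀ i, 0 < v i) (hB : 0 < B)
    (x : Fin n → ℝ) (j : Fin n)
    (hxub : ∀ i, x i ≤ 1)
    (hxfeas : ∑ i, b i * x i ≤ B)
    (hxopt : ∀ y : Fin n → ℝ, (∀ i, 0 ≤ y i ∧ y i ≤ 1) → (∑ i, b i * y i ≤ B) →
      ∑ i, v i * y i ≤ ∑ i, v i * x i)
    (hunique : ∀ i, i ≠ j → x i = 0 ∨ x i = 1) :
    ZIP n v b B ≤ ZIP n v b (B - b j * x j) + v j := by
  have hLP : ZIP n v b B ≤ ∑ i, v i * x i :=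
    ZIP_le hB.le fun y hy hyB => hxopt y (fun i => by rcases hy i with h | h <;> simp [h]) hyB
  have hdrop : ∀ i, Function.update x j 0 i = 0 ∨ Function.update x j 0 i = 1 := by
    intro i
    rcases eq_or_ne i j with rfl | hij
    · simp
    · simpa [hij] using hunique i hij
  have hrest : ∑ i, v i * x i - v j * x j ≤ ZIP n v b (B - b j * x j) := by
    rw [← sum_mul_update_zero]
    exact le_ZIP hdrop (by rw [sum_mul_update_zero]; linarith)
  have hj : v j * x j ≤ v j := mul_le_of_le_one_right (hv j).le (hxub j)
  linarith

/-- if the optimal fractional solution has a unique fractional item `j`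
with fraction `x j`, then `Z_IP(B) ≤ Z_IP(B - b_j x_j) + v_j`. -/
theorem ZIP_budget_split (n : ℕ) (v b : Fin n → ℝ) (B : ℝ)
    (hv : ∀ i, 0 < v i) (hb : ∀ i, 0 < b i) (hB : 0 < B)
    (hdist : ∀ i k : Fin n, i ≠ k → v i / b i ≠ v k / b k)
    (x : Fin n → ℝ) (j : Fin n)
    (hxlb : ∀ i, 0 ≤ x i) (hxub : ∀ i, x i ≤ 1)
    (hxfeas : ∑ i, b i * x i ≤ B)
    (hxopt : ∀ y : Fin n → ℝ, (∀ i, 0 ≤ y i ∧ y i ≤ 1) → (∑ i, b i * y i ≤ B) →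
      ∑ i, v i * y i ≤ ∑ i, v i * x i)
    (hjfrac : 0 < x j ∧ x j < 1)
    (hunique : ∀ i, i ≠ j → x i = 0 ∨ x i = 1) :
    ZIP n v b B ≤ ZIP n v b (B - b j * x j) + v j :=
  ZIP_budget_split_general n v b B hv hB x j hxub hxfeas hxopt hunique
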